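/- arXiv:2303.14105 — 5 statements merged into one kernel-verified Lean document; each statement's English description precedes it below -/
import Mathlib

section
/- The Riemann curvature tensor R̃ of Sol^4_0 satisfies, in the orthonormal frame E_1,…,E_4: R̃(E_1,E_2)E_2 = -E_1, R̃(E_1,E_3)E_3 = 2E_1, R̃(E_1,E_4)E_4 = -E_1, R̃(E_2,E_3)E_3 = 2E_2, R̃(E_2,E_4)E_4 = -E_2, R̃(E_3,E_4)E_4 = -4E_3, and R̃(E_i,E_j)E_k = 0 whenever i, j, k are pairwise distinct. -/
noncomputable section

abbrev Pt := Fin 4 → ℝ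
abbrev Vec := Fin 4 → ℝ
abbrev VF := Pt → Vec

/-- Diagonal coefficients of the metric g = e^{-2t}(dx²+dy²)+e^{4t}dz²+dt². -/
def Gc (i : Fin 4) (p : Pt) : ℝ :=
  if i = 0 ∨ i = 1 then Real.exp (-2 * p 3)
  else if i = 2 then Real.exp (4 * p 3) else 1

/-- The Riemannian metric of Sol⁴₀ at a point, as a bilinear form on tangent vectors. -/
def gSol (p : Pt) (v w : Vec) : ℝ := ∑ i, Gc i p * v i * w i

def cvec (i : Fin 4) : Vec := fun j => if j = i then 1 else 0

/-- Partial derivative in the i-th coordinate direction. -/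
def pd (i : Fin 4) (f : Pt → ℝ) (p : Pt) : ℝ := fderiv ℝ f p (cvec i)

/-- Christoffel symbols of the (diagonal) metric gSol. -/
def Chr (k i j : Fin 4) (p : Pt) : ℝ :=
  (1 / (2 * Gc k p)) *
    ((if j = k then pd i (Gc k) p else 0) +
     (if i = k then pd j (Gc k) p else 0) -
     (if i = j then pd k (Gc i) p else 0))

/-- Levi-Civita covariant derivative ∇̃_X Y of the metric gSol. -/
def nabla (X Y : VF) : VF := fun p k =>
  fderiv ℝ (fun q => Y q k) p (X p) + ∑ i, ∑ j, Chr k i j p * X p i * Y p j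

/-- Lie bracket of vector fields. -/
def bracket (X Y : VF) : VF := fun p k =>
  fderiv ℝ (fun q => Y q k) p (X p) - fderiv ℝ (fun q => X q k) p (Y p)

/-- Riemann curvature tensor R(X,Y)Z = ∇_X∇_Y Z − ∇_Y∇_X Z − ∇_{[X,Y]}Z. -/
def Riem (X Y Z : VF) : VF := fun p =>
  nabla X (nabla Y Z) p - nabla Y (nabla X Z) p - nabla (bracket X Y) Z p

/-- The orthonormal frame E₁ = eᵗ∂ₓ, E₂ = eᵗ∂_y, E₃ = e^{-2t}∂_z, E₄ = ∂_t. -/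
def EE (i : Fin 4) : VF := fun p j =>
  if i = 0 then (if j = 0 then Real.exp (p 3) else 0)
  else if i = 1 then (if j = 1 then Real.exp (p 3) else 0)
  else if i = 2 then (if j = 2 then Real.exp (-2 * p 3) else 0)
  else (if j = 3 then 1 else 0)

-- helpers
def pr3 : Pt →L[ℝ] ℝ := ContinuousLinearMap.proj 3

lemma fd_cexp (c : ℝ) (p : Pt) (v : Fin 4 → ℝ) :
    fderiv ℝ (fun q : Pt => Real.exp (c * q 3)) p v = c * Real.exp (c * p 3) * v 3 := by
  have h1 : HasFDerivAt (fun q : Pt => q 3) pr3 p := pr3.hasFDerivAt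
  have h2 := (h1.const_mul c).exp
  rw [h2.fderiv]
  simp [pr3, ContinuousLinearMap.proj]
  ring

lemma fd_cexp2 (c d : ℝ) (p : Pt) (v : Fin 4 → ℝ) :
    fderiv ℝ (fun q : Pt => c * Real.exp (d * q 3)) p v
      = c * (d * Real.exp (d * p 3)) * v 3 := by
  have h1 : HasFDerivAt (fun q : Pt => q 3) pr3 p := pr3.hasFDerivAt
  have h2 := ((h1.const_mul d).exp).const_mul c
  rw [h2.fderiv]
  simp [pr3, ContinuousLinearMap.proj]
  ring

def cG (i : Fin 4) : ℝ := if i = 0 ∨ i = 1 then -2 else if i = 2 then 4 else 0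

lemma Gc_eq (i : Fin 4) : Gc i = fun p => Real.exp (cG i * p 3) := by
  fin_cases i <;> funext p <;> simp [Gc, cG]

lemma pd_Gc (i k : Fin 4) (p : Pt) :
    pd i (Gc k) p = if i = 3 then cG k * Real.exp (cG k * p 3) else 0 := by
  rw [pd, Gc_eq, fd_cexp]
  rcases eq_or_ne i 3 with h | h
  · subst h; simp [cvec]
  · simp [cvec, h, Ne.symm h]

def F (m : Fin 4) (c d : ℝ) : VF := fun p j => if j = m then c * Real.exp (d * p 3) else 0

lemma nabla_F (m n : Fin 4) (c d c' d' : ℝ) (p : Pt) (k : Fin 4) :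
    nabla (F m c d) (F n c' d') p k =
      (if k = n then c' * (d' * Real.exp (d' * p 3)) * F m c d p 3 else 0)
      + Chr k m n p * (c * Real.exp (d * p 3)) * (c' * Real.exp (d' * p 3)) := by
  unfold nabla
  congr 1
  · rcases eq_or_ne k n with h | h
    · have he : (fun q : Pt => F n c' d' q k) = fun q : Pt => c' * Real.exp (d' * q 3) := by
        funext q; simp [F, h]
      rw [he, fd_cexp2]
      simp [h]
    · have he : (fun q : Pt => F n c' d' q k) = fun _ : Pt => (0:ℝ) := by
        funext q; simp [F, h]
      rw [he]
      simp [h]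
  · rw [Finset.sum_eq_single m]
    · rw [Finset.sum_eq_single n]
      · simp [F]
      · intro b _ hb; simp [F, hb]
      · simp
    · intro b _ hb; simp [F, hb]
    · simp

lemma bracket_F (m n : Fin 4) (c d c' d' : ℝ) (p : Pt) (k : Fin 4) :
    bracket (F m c d) (F n c' d') p k =
      (if k = n then c' * (d' * Real.exp (d' * p 3)) * F m c d p 3 else 0)
      - (if k = m then c * (d * Real.exp (d * p 3)) * F n c' d' p 3 else 0) := by
  unfold bracket
  congr 1
  · rcases eq_or_ne k n with h | h
    · have he : (fun q : Pt => F n c' d' q k) = fun q : Pt => c' * Real.exp (d' * q 3) := by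
        funext q; simp [F, h]
      rw [he, fd_cexp2]; simp [h]
    · have he : (fun q : Pt => F n c' d' q k) = fun _ : Pt => (0:ℝ) := by
        funext q; simp [F, h]
      rw [he]; simp [h]
  · rcases eq_or_ne k m with h | h
    · have he : (fun q : Pt => F m c d q k) = fun q : Pt => c * Real.exp (d * q 3) := by
        funext q; simp [F, h]
      rw [he, fd_cexp2]; simp [h]
    · have he : (fun q : Pt => F m c d q k) = fun _ : Pt => (0:ℝ) := by
        funext q; simp [F, h]
      rw [he]; simp [h]

def dE (i : Fin 4) : ℝ := if i = 2 then -2 else if i = 3 then 0 else 1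
def tIdx (a b : Fin 4) : Fin 4 := if a = b ∧ a ≠ 3 then 3 else if b = 3 then a else 0
def tC (a b : Fin 4) : ℝ :=
  if a = 3 then 0 else if a = b then (if a = 2 then -2 else 1)
  else if b = 3 then (if a = 2 then 2 else -1) else 0
def bIdx (a b : Fin 4) : Fin 4 := if b = 3 then a else if a = 3 then b else 0
def bC (a b : Fin 4) : ℝ :=
  if a = b then 0 else if b = 3 then (if a = 2 then 2 else -1)
  else if a = 3 then (if b = 2 then -2 else 1) else 0

lemma expm2 (x : ℝ) : Real.exp (-2 * x) = (Real.exp x * Real.exp x)⁻¹ := by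
  rw [← Real.exp_add, ← Real.exp_neg]; ring_nf
lemma expm2' (x : ℝ) : Real.exp (-(2 * x)) = (Real.exp x * Real.exp x)⁻¹ := by
  rw [← expm2]; ring_nf
lemma exp4 (x : ℝ) : Real.exp (4 * x) = Real.exp x * Real.exp x * (Real.exp x * Real.exp x) := by
  rw [show (4:ℝ) * x = x + x + (x + x) by ring, Real.exp_add, Real.exp_add]

set_option maxHeartbeats 1000000 in
lemma nabla_cE (a b : Fin 4) (s t : ℝ) :
    nabla (F a s (dE a)) (F b t (dE b)) = F (tIdx a b) (s * t * tC a b) (dE (tIdx a b)) := by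
  funext p k
  rw [nabla_F]
  fin_cases a <;> fin_cases b <;> fin_cases k <;>
    simp [Chr, pd_Gc, Gc, cG, dE, tIdx, tC, F, expm2, expm2', exp4] <;>
    (try field_simp) <;> (try ring)

set_option maxHeartbeats 1000000 in
lemma bracket_cE (a b : Fin 4) (s t : ℝ) :
    bracket (F a s (dE a)) (F b t (dE b)) = F (bIdx a b) (s * t * bC a b) (dE (bIdx a b)) := by
  funext p k
  rw [bracket_F]
  fin_cases a <;> fin_cases b <;> fin_cases k <;>
    simp [dE, bIdx, bC, F, expm2, expm2', exp4] <;>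
    (try field_simp) <;> (try ring)

lemma EE_eq (i : Fin 4) : EE i = F i 1 (dE i) := by
  fin_cases i <;> funext p j <;> simp [EE, F, dE]


set_option maxHeartbeats 1000000 in
/-- Components of the Riemann curvature tensor of Sol⁴₀ in the frame E₁,…,E₄. -/
theorem sol40_curvature_components :
    (∀ p, Riem (EE 0) (EE 1) (EE 1) p = -(EE 0 p)) ∧
    (∀ p, Riem (EE 0) (EE 2) (EE 2) p = (2 : ℝ) • EE 0 p) ∧
    (∀ p, Riem (EE 0) (EE 3) (EE 3) p = -(EE 0 p)) ∧
    (∀ p, Riem (EE 1) (EE 2) (EE 2) p = (2 : ℝ) • EE 1 p) ∧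
    (∀ p, Riem (EE 1) (EE 3) (EE 3) p = -(EE 1 p)) ∧
    (∀ p, Riem (EE 2) (EE 3) (EE 3) p = (-4 : ℝ) • EE 2 p) ∧
    (∀ i j k : Fin 4, i ≠ j → j ≠ k → i ≠ k → ∀ p, Riem (EE i) (EE j) (EE k) p = 0) := by

  refine ⟨?_, ?_, ?_, ?_, ?_, ?_, ?_⟩
  · intro p
    simp only [Riem, EE_eq, bracket_cE, nabla_cE]
    funext k
    fin_cases k <;> simp [F, tIdx, tC, bIdx, bC, dE] <;> try ring
  · intro p
    simp only [Riem, EE_eq, bracket_cE, nabla_cE]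
    funext k
    fin_cases k <;> simp [F, tIdx, tC, bIdx, bC, dE] <;> try ring
  · intro p
    simp only [Riem, EE_eq, bracket_cE, nabla_cE]
    funext k
    fin_cases k <;> simp [F, tIdx, tC, bIdx, bC, dE] <;> try ring
  · intro p
    simp only [Riem, EE_eq, bracket_cE, nabla_cE]
    funext k
    fin_cases k <;> simp [F, tIdx, tC, bIdx, bC, dE] <;> try ring
  · intro p
    simp only [Riem, EE_eq, bracket_cE, nabla_cE]
    funext k
    fin_cases k <;> simp [F, tIdx, tC, bIdx, bC, dE] <;> try ring
  · intro p
    simp only [Riem, EE_eq, bracket_cE, nabla_cE]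
    funext k
    fin_cases k <;> simp [F, tIdx, tC, bIdx, bC, dE] <;> try ring
  · intro i j k hij hjk hik p
    fin_cases i <;> fin_cases j <;> fin_cases k <;>
      first
        | exact absurd rfl hij
        | exact absurd rfl hjk
        | exact absurd rfl hik
        | (simp only [Riem, EE_eq, bracket_cE, nabla_cE]
           funext l
           fin_cases l <;> simp [F, tIdx, tC, bIdx, bC, dE] <;> try ring)
end
end

section
/- The almost complex structure J_+ on Sol^4_0 (defined by J_+E_1 = E_2, J_+E_2 = -E_1, J_+E_3 = E_4, J_+E_4 = -E_3) has vanishing Nijenhuis tensor, i.e., N(X,Y) = [J_+X, J_+Y] - J_+[J_+X, Y] - J_+[X, J_+Y] - [X,Y] = 0 for all vector fields X, Y; hence J_+ is integrable. -/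
noncomputable section

/-- The almost complex structure J₊ (J₊E₁=E₂, J₊E₂=−E₁, J₊E₃=E₄, J₊E₄=−E₃) in coordinates. -/
def Jp (p : Pt) (v : Vec) : Vec := fun k =>
  if k = 0 then -v 1
  else if k = 1 then v 0
  else if k = 2 then -(Real.exp (-2 * p 3) * v 3)
  else Real.exp (2 * p 3) * v 2

/-- J₊ applied to a vector field. -/
def JF (X : VF) : VF := fun p => Jp p (X p)

lemma fd_exp_mul (c : ℝ) (f : Pt → ℝ) (p : Pt) (hf : DifferentiableAt ℝ f p) (v : Vec) :
    fderiv ℝ (fun q => Real.exp (c * q 3) * f q) p v =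
      c * Real.exp (c * p 3) * f p * v 3 + Real.exp (c * p 3) * fderiv ℝ f p v := by
  have h3 : HasFDerivAt (fun q : Pt => q 3)
      (ContinuousLinearMap.proj 3 : Pt →L[ℝ] ℝ) p :=
    (ContinuousLinearMap.proj (R := ℝ) (φ := fun _ : Fin 4 => ℝ) 3).hasFDerivAt
  have hc : HasFDerivAt (fun q : Pt => c * q 3)
      (c • (ContinuousLinearMap.proj 3 : Pt →L[ℝ] ℝ)) p := h3.const_mul c
  have hexp : HasFDerivAt (fun q : Pt => Real.exp (c * q 3))
      (Real.exp (c * p 3) • (c • (ContinuousLinearMap.proj 3 : Pt →L[ℝ] ℝ))) p :=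
    by have := (Real.hasDerivAt_exp (c * p 3)).comp_hasFDerivAt p hc; exact this
  have h := (hexp.mul hf.hasFDerivAt).fderiv
  rw [show (fun q => Real.exp (c * q 3) * f q) = (fun q => Real.exp (c * q 3)) * f from rfl, h]
  simp [ContinuousLinearMap.smul_apply, ContinuousLinearMap.proj_apply]
  ring


lemma Jp_app0 (p : Pt) (v : Vec) : Jp p v 0 = -v 1 := rfl
lemma Jp_app1 (p : Pt) (v : Vec) : Jp p v 1 = v 0 := rfl
lemma Jp_app2 (p : Pt) (v : Vec) : Jp p v 2 = -(Real.exp (-2 * p 3) * v 3) := rfl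
lemma Jp_app3 (p : Pt) (v : Vec) : Jp p v 3 = Real.exp (2 * p 3) * v 2 := rfl

/-- The Nijenhuis tensor of J₊ vanishes: J₊ is integrable. -/
theorem sol40_Jplus_integrable (X Y : VF) (hX : ContDiff ℝ (⊤ : ℕ∞) X) (hY : ContDiff ℝ (⊤ : ℕ∞) Y) :
    ∀ p, bracket (JF X) (JF Y) p - Jp p (bracket (JF X) Y p)
        - Jp p (bracket X (JF Y) p) - bracket X Y p = 0 := by
  intro p
  have hXd : ∀ i, DifferentiableAt ℝ (fun q => X q i) p := fun i =>
    (differentiableAt_pi.mp ((hX.differentiable (by simp)).differentiableAt)) i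
  have hYd : ∀ i, DifferentiableAt ℝ (fun q => Y q i) p := fun i =>
    (differentiableAt_pi.mp ((hY.differentiable (by simp)).differentiableAt)) i
  funext k
  fin_cases k <;>
  · simp only [bracket, JF, Jp, Pi.sub_apply, Pi.zero_apply, Fin.zero_eta, Fin.mk_one,
      Fin.reduceFinMk, Fin.reduceEq, reduceIte, Fin.isValue]
    simp only [fderiv_fun_neg, ContinuousLinearMap.neg_apply,
      fd_exp_mul (-2) (fun q => X q 3) p (hXd 3),
      fd_exp_mul (-2) (fun q => Y q 3) p (hYd 3),
      fd_exp_mul (2) (fun q => X q 2) p (hXd 2),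
      fd_exp_mul (2) (fun q => Y q 2) p (hYd 2)]
    try simp only [Jp_app0, Jp_app1, Jp_app2, Jp_app3]
    try simp only [neg_mul, Real.exp_neg]
    try field_simp
    ring
end
end

section
/- The two-form e^{2t} Ω_+, where Ω_+(X,Y) = g(X, J_+Y), is closed on Sol^4_0; hence the complex structure J_+ is globally conformal Kähler with conformal Kähler metric e^{2t} g. -/
noncomputable section

/-- The two-form e^{2t}Ω₊ where Ω₊(v,w) = g(v, J₊w). -/
def ω (p : Pt) (v w : Vec) : ℝ := Real.exp (2 * p 3) * gSol p v (Jp p w)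


lemma omega_eq (p : Pt) (v w : Vec) :
    ω p v w = (v 1 * w 0 - v 0 * w 1)
      + Real.exp (4 * p 3) * (v 3 * w 2 - v 2 * w 3) := by
  have h1 : Real.exp (2 * p 3) * Real.exp (-(2 * p 3)) = 1 := by
    rw [← Real.exp_add]; norm_num
  have h2 : Real.exp (2 * p 3) * Real.exp (2 * p 3) = Real.exp (4 * p 3) := by
    rw [← Real.exp_add]; ring_nf
  simp [ω, gSol, Jp, Gc, Fin.sum_univ_four]
  linear_combination (v 1 * w 0 - v 0 * w 1 - Real.exp (4 * p 3) * v 2 * w 3) * h1 + v 3 * w 2 * h2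

lemma hasF (W : VF) (hW : ContDiff ℝ (⊤ : ℕ∞) W) (i : Fin 4) (p : Pt) :
    HasFDerivAt (fun q => W q i) (fderiv ℝ (fun q => W q i) p) p :=
  (((ContinuousLinearMap.proj i : Vec →L[ℝ] ℝ).differentiable.comp
    (hW.differentiable (by simp))) p).hasFDerivAt

lemma deriv_omega (Y Z : VF) (hY : ContDiff ℝ (⊤ : ℕ∞) Y) (hZ : ContDiff ℝ (⊤ : ℕ∞) Z) (p : Pt) (v : Vec) :
    fderiv ℝ (fun q => ω q (Y q) (Z q)) p v =
      fderiv ℝ (fun q => Y q 1) p v * Z p 0 + Y p 1 * fderiv ℝ (fun q => Z q 0) p v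
      - fderiv ℝ (fun q => Y q 0) p v * Z p 1 - Y p 0 * fderiv ℝ (fun q => Z q 1) p v
      + 4 * v 3 * Real.exp (4 * p 3) * (Y p 3 * Z p 2 - Y p 2 * Z p 3)
      + Real.exp (4 * p 3) * (fderiv ℝ (fun q => Y q 3) p v * Z p 2
          + Y p 3 * fderiv ℝ (fun q => Z q 2) p v
          - fderiv ℝ (fun q => Y q 2) p v * Z p 3
          - Y p 2 * fderiv ℝ (fun q => Z q 3) p v) := by
  have hlin : HasFDerivAt (fun q : Pt => 4 * q 3)
      ((4:ℝ) • (ContinuousLinearMap.proj 3 : Vec →L[ℝ] ℝ)) p := by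
    simpa using ((ContinuousLinearMap.proj 3 : Vec →L[ℝ] ℝ).hasFDerivAt (x := p)).const_mul (4:ℝ)
  have hE := hlin.exp
  have H := (((hasF Y hY 1 p).mul (hasF Z hZ 0 p)).sub
      ((hasF Y hY 0 p).mul (hasF Z hZ 1 p))).add
    (hE.mul (((hasF Y hY 3 p).mul (hasF Z hZ 2 p)).sub
      ((hasF Y hY 2 p).mul (hasF Z hZ 3 p))))
  have heq : (fun q => ω q (Y q) (Z q)) =
      fun q => (Y q 1 * Z q 0 - Y q 0 * Z q 1)
        + Real.exp (4 * q 3) * (Y q 3 * Z q 2 - Y q 2 * Z q 3) :=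
    funext fun q => omega_eq q (Y q) (Z q)
  rw [heq, (show HasFDerivAt (fun q => (Y q 1 * Z q 0 - Y q 0 * Z q 1)
        + Real.exp (4 * q 3) * (Y q 3 * Z q 2 - Y q 2 * Z q 3)) _ p from H).fderiv]
  simp [ContinuousLinearMap.add_apply, ContinuousLinearMap.sub_apply,
    ContinuousLinearMap.smul_apply, ContinuousLinearMap.proj_apply, smul_eq_mul]
  ring

/-- e^{2t}Ω₊ is closed: dω(X,Y,Z) = 0 for all smooth vector fields, where
dω(X,Y,Z) = Xω(Y,Z) − Yω(X,Z) + Zω(X,Y) − ω([X,Y],Z) + ω([X,Z],Y) − ω([Y,Z],X).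
Hence (Sol⁴₀, g, J₊) is globally conformal Kähler with Kähler metric e^{2t}g. -/
theorem sol40_conformal_Kaehler (X Y Z : VF)
    (hX : ContDiff ℝ (⊤ : ℕ∞) X) (hY : ContDiff ℝ (⊤ : ℕ∞) Y) (hZ : ContDiff ℝ (⊤ : ℕ∞) Z) :
    ∀ p, fderiv ℝ (fun q => ω q (Y q) (Z q)) p (X p)
        - fderiv ℝ (fun q => ω q (X q) (Z q)) p (Y p)
        + fderiv ℝ (fun q => ω q (X q) (Y q)) p (Z p)
        - ω p (bracket X Y p) (Z p)
        + ω p (bracket X Z p) (Y p)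
        - ω p (bracket Y Z p) (X p) = 0 := by
  intro p
  rw [deriv_omega Y Z hY hZ p (X p), deriv_omega X Z hX hZ p (Y p),
      deriv_omega X Y hX hY p (Z p), omega_eq, omega_eq, omega_eq]
  simp only [bracket]
  ring
end
end

section
/- For all a, b, c ∈ R with (a,b) ≠ (0,0), the hypersurface {(x,y,z,t) ∈ Sol^4_0 : ax + by = c} is totally geodesic: the second fundamental form with respect to the unit normal N = e^t(a∂_x + b∂_y)/√(a²+b²) vanishes identically. -/
noncomputable section

/-- Unit normal e^t(a∂ₓ+b∂_y)/√(a²+b²) to the hypersurface {ax + by = c}. -/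
def Nab (a b : ℝ) (p : Pt) : Vec := fun i =>
  if i = 0 then Real.exp (p 3) * a / Real.sqrt (a ^ 2 + b ^ 2)
  else if i = 1 then Real.exp (p 3) * b / Real.sqrt (a ^ 2 + b ^ 2)
  else 0


lemma fderiv_exp_mul (cc : ℝ) (p : Pt) (v : Pt) :
    fderiv ℝ (fun q : Pt => Real.exp (cc * q 3)) p v = cc * Real.exp (cc * p 3) * v 3 := by
  have h1 : HasFDerivAt (fun q : Pt => cc * q 3)
      (cc • (ContinuousLinearMap.proj 3 : Pt →L[ℝ] ℝ)) p :=
    ((ContinuousLinearMap.proj 3 : Pt →L[ℝ] ℝ).hasFDerivAt).const_smul cc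
  have h2 : HasFDerivAt (fun q : Pt => Real.exp (cc * q 3))
      (Real.exp (cc * p 3) • cc • (ContinuousLinearMap.proj 3 : Pt →L[ℝ] ℝ)) p :=
    h1.exp
  rw [h2.fderiv]
  simp [ContinuousLinearMap.proj_apply]
  ring

lemma pd_Gc0 (i : Fin 4) (p : Pt) :
    pd i (Gc 0) p = if i = 3 then -2 * Real.exp (-2 * p 3) else 0 := by
  have hg : Gc 0 = fun q : Pt => Real.exp (-2 * q 3) := by funext q; simp [Gc]
  rw [pd, hg, fderiv_exp_mul]
  fin_cases i <;> simp [cvec]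

lemma pd_Gc1 (i : Fin 4) (p : Pt) :
    pd i (Gc 1) p = if i = 3 then -2 * Real.exp (-2 * p 3) else 0 := by
  have hg : Gc 1 = fun q : Pt => Real.exp (-2 * q 3) := by funext q; simp [Gc]
  rw [pd, hg, fderiv_exp_mul]
  fin_cases i <;> simp [cvec]

lemma pd_Gc2 (i : Fin 4) (p : Pt) :
    pd i (Gc 2) p = if i = 3 then 4 * Real.exp (4 * p 3) else 0 := by
  have hg : Gc 2 = fun q : Pt => Real.exp (4 * q 3) := by funext q; simp [Gc]
  rw [pd, hg, fderiv_exp_mul]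
  fin_cases i <;> simp [cvec]

lemma pd_Gc3 (i : Fin 4) (p : Pt) : pd i (Gc 3) p = 0 := by
  have hg : Gc 3 = fun _ : Pt => (1:ℝ) := by funext q; simp [Gc]
  rw [pd, hg, fderiv_fun_const]
  simp

lemma Chr0 (i j : Fin 4) (p : Pt) :
    Chr 0 i j p = if (i = 0 ∧ j = 3) ∨ (i = 3 ∧ j = 0) then -1 else 0 := by
  have he := Real.exp_ne_zero (-2 * p 3)
  fin_cases i <;> fin_cases j <;>
    simp [Chr, pd_Gc0, pd_Gc1, pd_Gc2, pd_Gc3, Gc] <;> field_simp <;> ring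

lemma Chr1 (i j : Fin 4) (p : Pt) :
    Chr 1 i j p = if (i = 1 ∧ j = 3) ∨ (i = 3 ∧ j = 1) then -1 else 0 := by
  have he := Real.exp_ne_zero (-2 * p 3)
  fin_cases i <;> fin_cases j <;>
    simp [Chr, pd_Gc0, pd_Gc1, pd_Gc2, pd_Gc3, Gc] <;> field_simp <;> ring

/-- The hypersurface {ax + by = c} of Sol⁴₀, (a,b) ≠ (0,0), is totally geodesic. -/
theorem sol40_vertical_plane_totally_geodesic (a b c : ℝ) (hab : a ≠ 0 ∨ b ≠ 0)
    (X Y : VF) (hX : ContDiff ℝ (⊤ : ℕ∞) X) (hY : ContDiff ℝ (⊤ : ℕ∞) Y)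
    (htX : ∀ p : Pt, a * p 0 + b * p 1 = c → a * X p 0 + b * X p 1 = 0)
    (htY : ∀ p : Pt, a * p 0 + b * p 1 = c → a * Y p 0 + b * Y p 1 = 0) :
    ∀ p : Pt, a * p 0 + b * p 1 = c → gSol p (nabla X Y p) (Nab a b p) = 0 := by
  intro p hp
  have hYk : ∀ k : Fin 4, Differentiable ℝ (fun q => Y q k) := fun k =>
    ((ContinuousLinearMap.proj k : Vec →L[ℝ] ℝ).contDiff.comp hY).differentiable (by simp)
  set f : Pt → ℝ := fun q => a * Y q 0 + b * Y q 1 with hf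
  have hfd : DifferentiableAt ℝ f p :=
    (((hYk 0) p).const_mul a).add (((hYk 1) p).const_mul b)
  have hγ : HasDerivAt (fun s : ℝ => p + s • X p) (X p) 0 := by
    simpa using ((hasDerivAt_id (0:ℝ)).smul_const (X p)).const_add p
  have hγ0 : (fun s : ℝ => p + s • X p) 0 = p := by simp
  have hcomp : HasDerivAt (fun s : ℝ => f (p + s • X p)) (fderiv ℝ f p (X p)) 0 := by
    have hfp : HasFDerivAt f (fderiv ℝ f p) ((fun s : ℝ => p + s • X p) 0) := by
      rw [hγ0]; exact hfd.hasFDerivAt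
    have := hfp.comp_hasDerivAt 0 hγ
    exact this
  have hconst : (fun s : ℝ => f (p + s • X p)) = fun _ => (0:ℝ) := by
    funext s
    have hmem : a * (p + s • X p) 0 + b * (p + s • X p) 1 = c := by
      have h1 : (p + s • X p) 0 = p 0 + s * X p 0 := rfl
      have h2 : (p + s • X p) 1 = p 1 + s * X p 1 := rfl
      rw [h1, h2]
      have hX0 := htX p hp
      linear_combination hp + s * hX0
    exact htY _ hmem
  have hkeyD : fderiv ℝ f p (X p) = 0 := by
    have h0 : HasDerivAt (fun s : ℝ => f (p + s • X p)) 0 0 := by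
      rw [hconst]; exact hasDerivAt_const 0 0
    exact hcomp.unique h0
  have hlin : fderiv ℝ f p (X p) =
      a * fderiv ℝ (fun q => Y q 0) p (X p) + b * fderiv ℝ (fun q => Y q 1) p (X p) := by
    have h := ((((hYk 0) p).hasFDerivAt.const_mul a).add
      (((hYk 1) p).hasFDerivAt.const_mul b)).fderiv
    rw [hf, show (fun q => a * Y q 0 + b * Y q 1) = ((fun y => a * Y y 0) + fun y => b * Y y 1) from rfl, h]
    simp
  have key : a * nabla X Y p 0 + b * nabla X Y p 1 = 0 := by
    have e1 := htX p hp
    have e2 := htY p hp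
    have e3 := hkeyD
    rw [hlin] at e3
    simp only [nabla, Fin.sum_univ_four, Chr0, Chr1]
    norm_num
    simp only [Fin.isValue, show ((0:Fin 4) = 3) = False from by decide,
      show ((1:Fin 4) = 3) = False from by decide, show ((2:Fin 4) = 3) = False from by decide,
      show ((2:Fin 4) = 0) = False from by decide, show ((2:Fin 4) = 1) = False from by decide,
      show ((3:Fin 4) = 0) = False from by decide, show ((3:Fin 4) = 1) = False from by decide,
      if_false, false_and, and_false, or_false, false_or, mul_zero, add_zero, zero_add]
    linear_combination e3 - Y p 3 * e1 - X p 3 * e2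
  have expand : gSol p (nabla X Y p) (Nab a b p) =
      (Real.exp (-2 * p 3) * Real.exp (p 3) / Real.sqrt (a ^ 2 + b ^ 2)) *
        (a * nabla X Y p 0 + b * nabla X Y p 1) := by
    simp [gSol, Nab, Gc, Fin.sum_univ_four]
    ring
  rw [expand, key, mul_zero]
end
end

section
/- Let γ = (γ_1, γ_2): I → R² be a smooth regular curve satisfying γ_1''γ_2' - γ_1'γ_2'' + 5γ_1'(γ_2')² + 3e^{4γ_2}(γ_1')³ = 0, and consider the immersed hypersurface F(u_1,u_2,u_3) = (u_1, u_2, γ_1(u_3), γ_2(u_3)) in Sol^4_0. Then F is totally umbilical: with orthonormal tangent frame E_1, E_2, W = (γ_1'e^{2γ_2}E_3 + γ_2'E_4)/√((γ_1')²e^{4γ_2}+(γ_2')²) and unit normal N = (γ_2'E_3 - γ_1'e^{2γ_2}E_4)/√((γ_1')²e^{4γ_2}+(γ_2')²), the second fundamental form satisfies h(E_1,E_1) = h(E_2,E_2) = h(W,W) = λN and h = 0 on mixed pairs, where λ = e^{2γ_2}(γ_1''γ_2' - γ_1'γ_2'' + 4γ_1'(γ_2')² + 2e^{4γ_2}(γ_1')³)/((γ_1')²e^{4γ_2}+(γ_2')²)^{3/2}.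 -/
noncomputable section

/-- The immersion F(u₁,u₂,u₃) = (u₁, u₂, γ₁(u₃), γ₂(u₃)) into Sol⁴₀. -/
def F19 (γ1 γ2 : ℝ → ℝ) (u : Fin 3 → ℝ) : Pt := fun i =>
  if i = 0 then u 0 else if i = 1 then u 1 else if i = 2 then γ1 (u 2) else γ2 (u 2)

/-- Coordinate tangent vectors ∂F/∂u_i of the immersion. -/
def dF19 (γ1 γ2 : ℝ → ℝ) (i : Fin 3) (u : Fin 3 → ℝ) : Vec :=
  if i = 0 then cvec 0 else if i = 1 then cvec 1
  else (fun k => if k = 2 then deriv γ1 (u 2) else if k = 3 then deriv γ2 (u 2) else 0)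

/-- Second coordinate derivatives ∂²F/∂u_i∂u_j of the immersion. -/
def ddF19 (γ1 γ2 : ℝ → ℝ) (i j : Fin 3) (u : Fin 3 → ℝ) : Vec :=
  if i = 2 ∧ j = 2 then
    (fun k => if k = 2 then deriv (deriv γ1) (u 2)
              else if k = 3 then deriv (deriv γ2) (u 2) else 0)
  else 0

/-- Ambient covariant derivative ∇̃_{∂u_i}∂u_j F along the immersion. -/
def covF19 (γ1 γ2 : ℝ → ℝ) (i j : Fin 3) (u : Fin 3 → ℝ) : Vec := fun k =>
  ddF19 γ1 γ2 i j u k +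
    ∑ a, ∑ b, Chr k a b (F19 γ1 γ2 u) * dF19 γ1 γ2 i u a * dF19 γ1 γ2 j u b

/-- √((γ₁′)²e^{4γ₂}+(γ₂′)²) evaluated at the parameter u₃. -/
def D19 (γ1 γ2 : ℝ → ℝ) (s : ℝ) : ℝ :=
  Real.sqrt ((deriv γ1 s) ^ 2 * Real.exp (4 * γ2 s) + (deriv γ2 s) ^ 2)

/-- The unit normal N = (γ₂′E₃ − γ₁′e^{2γ₂}E₄)/√((γ₁′)²e^{4γ₂}+(γ₂′)²). -/
def N19 (γ1 γ2 : ℝ → ℝ) (u : Fin 3 → ℝ) : Vec := fun k =>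
  if k = 2 then deriv γ2 (u 2) * Real.exp (-2 * γ2 (u 2)) / D19 γ1 γ2 (u 2)
  else if k = 3 then -(deriv γ1 (u 2) * Real.exp (2 * γ2 (u 2))) / D19 γ1 γ2 (u 2)
  else 0

/-- Scalar second fundamental form h(∂u_i, ∂u_j) = g(∇̃_{∂u_i}∂u_j F, N). -/
def h19 (γ1 γ2 : ℝ → ℝ) (i j : Fin 3) (u : Fin 3 → ℝ) : ℝ :=
  gSol (F19 γ1 γ2 u) (covF19 γ1 γ2 i j u) (N19 γ1 γ2 u)

/-- The umbilicity factor λ = e^{2γ₂}(γ₁″γ₂′ − γ₁′γ₂″ + 4γ₁′(γ₂′)² + 2e^{4γ₂}(γ₁′)³)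
/((γ₁′)²e^{4γ₂}+(γ₂′)²)^{3/2}. -/
def lam19 (γ1 γ2 : ℝ → ℝ) (s : ℝ) : ℝ :=
  Real.exp (2 * γ2 s) *
    (deriv (deriv γ1) s * deriv γ2 s - deriv γ1 s * deriv (deriv γ2) s +
      4 * deriv γ1 s * (deriv γ2 s) ^ 2 +
      2 * Real.exp (4 * γ2 s) * (deriv γ1 s) ^ 3) /
    ((deriv γ1 s) ^ 2 * Real.exp (4 * γ2 s) + (deriv γ2 s) ^ 2) ^ ((3 : ℝ) / 2)

lemma pd_exp (c : ℝ) (i : Fin 4) (p : Pt) :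
    pd i (fun q : Pt => Real.exp (c * q 3)) p = if i = 3 then c * Real.exp (c * p 3) else 0 := by
  have hL : HasFDerivAt (fun q : Pt => q 3)
      (ContinuousLinearMap.proj (R := ℝ) (φ := fun _ : Fin 4 => ℝ) 3) p :=
    (ContinuousLinearMap.proj (R := ℝ) (φ := fun _ : Fin 4 => ℝ) 3).hasFDerivAt
  have hd : HasDerivAt (fun x : ℝ => Real.exp (c * x)) (Real.exp (c * p 3) * (c * 1)) (p 3) :=
    ((hasDerivAt_id (p 3)).const_mul c).exp
  have h := hd.comp_hasFDerivAt p hL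
  have h' : HasFDerivAt (fun q : Pt => Real.exp (c * q 3))
      ((Real.exp (c * p 3) * (c * 1)) • ContinuousLinearMap.proj (R := ℝ) (φ := fun _ : Fin 4 => ℝ) 3) p := h
  rw [pd, h'.fderiv]
  simp only [ContinuousLinearMap.smul_apply, ContinuousLinearMap.proj_apply, cvec, smul_eq_mul]
  fin_cases i <;> simp [Fin.ext_iff, eq_comm, mul_comm]

lemma Gc0 : Gc 0 = fun p : Pt => Real.exp (-2 * p 3) := by funext p; simp [Gc]
lemma Gc1 : Gc 1 = fun p : Pt => Real.exp (-2 * p 3) := by funext p; simp [Gc]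
lemma Gc2 : Gc 2 = fun p : Pt => Real.exp (4 * p 3) := by funext p; simp [Gc]
lemma Gc3 : Gc 3 = fun _ : Pt => (1 : ℝ) := by funext p; simp [Gc]

lemma Chr_eq (k i j : Fin 4) (p : Pt) : Chr k i j p =
    if k = 0 ∧ ((i = 0 ∧ j = 3) ∨ (i = 3 ∧ j = 0)) then -1
    else if k = 1 ∧ ((i = 1 ∧ j = 3) ∨ (i = 3 ∧ j = 1)) then -1
    else if k = 2 ∧ ((i = 2 ∧ j = 3) ∨ (i = 3 ∧ j = 2)) then 2
    else if k = 3 ∧ ((i = 0 ∧ j = 0) ∨ (i = 1 ∧ j = 1)) then Real.exp (-2 * p 3)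
    else if k = 3 ∧ i = 2 ∧ j = 2 then -2 * Real.exp (4 * p 3)
    else 0 := by
  have e1 := Real.exp_ne_zero (-2 * p 3)
  have e2 := Real.exp_ne_zero (4 * p 3)
  fin_cases k <;> fin_cases i <;> fin_cases j <;>
    simp (config := { decide := true }) [Chr, pd_Gc0, pd_Gc1, pd_Gc2, pd_Gc3, Gc] <;>
    field_simp <;> ring

lemma h00 (γ1 γ2 : ℝ → ℝ) (u : Fin 3 → ℝ) :
    h19 γ1 γ2 0 0 u = -(deriv γ1 (u 2)) / D19 γ1 γ2 (u 2) := by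
  simp (config := { decide := true }) [h19, gSol, covF19, ddF19, dF19, N19, F19, cvec, Chr_eq,
    Fin.sum_univ_four, Gc, Real.exp_neg, ← Real.exp_add]
  ring_nf
  rw [mul_inv_cancel₀ (Real.exp_ne_zero _)]
  ring

lemma h11 (γ1 γ2 : ℝ → ℝ) (u : Fin 3 → ℝ) :
    h19 γ1 γ2 1 1 u = -(deriv γ1 (u 2)) / D19 γ1 γ2 (u 2) := by
  simp (config := { decide := true }) [h19, gSol, covF19, ddF19, dF19, N19, F19, cvec, Chr_eq,
    Fin.sum_univ_four, Gc, Real.exp_neg, ← Real.exp_add]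
  ring_nf
  rw [mul_inv_cancel₀ (Real.exp_ne_zero _)]
  ring

lemma hmix (γ1 γ2 : ℝ → ℝ) (u : Fin 3 → ℝ) (i j : Fin 3) (hij : i ≠ j) :
    h19 γ1 γ2 i j u = 0 := by
  fin_cases i <;> fin_cases j <;> simp_all <;>
  simp (config := { decide := true }) [h19, gSol, covF19, ddF19, dF19, N19, F19, cvec, Chr_eq,
    Fin.sum_univ_four, Gc]

lemma h22' (γ1 γ2 : ℝ → ℝ) (u : Fin 3 → ℝ) :
    h19 γ1 γ2 2 2 u = Real.exp (2 * γ2 (u 2)) / D19 γ1 γ2 (u 2) *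
      (deriv (deriv γ1) (u 2) * deriv γ2 (u 2) - deriv γ1 (u 2) * deriv (deriv γ2) (u 2) +
       4 * deriv γ1 (u 2) * (deriv γ2 (u 2))^2 +
       2 * Real.exp (4 * γ2 (u 2)) * (deriv γ1 (u 2))^3) := by
  simp (config := { decide := true }) [h19, gSol, covF19, ddF19, dF19, N19, F19, cvec, Chr_eq,
    Fin.sum_univ_four, Gc, Real.exp_neg, ← Real.exp_add]
  ring_nf
  have he : Real.exp (γ2 (u 2) * 4) * (Real.exp (γ2 (u 2) * 2))⁻¹ = Real.exp (γ2 (u 2) * 2) := by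
    rw [← Real.exp_neg, ← Real.exp_add]; ring_nf
  linear_combination (deriv (deriv γ1) (u 2) * deriv γ2 (u 2) +
    4 * deriv γ1 (u 2) * deriv γ2 (u 2) ^ 2) * (D19 γ1 γ2 (u 2))⁻¹ * he

lemma Apos (γ1 γ2 : ℝ → ℝ) (s : ℝ) (hreg : 0 < (deriv γ1 s) ^ 2 + (deriv γ2 s) ^ 2) :
    0 < (deriv γ1 s) ^ 2 * Real.exp (4 * γ2 s) + (deriv γ2 s) ^ 2 := by
  rcases eq_or_ne (deriv γ1 s) 0 with h | h
  · simpa [h] using hreg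
  · have h1 : 0 < (deriv γ1 s) ^ 2 := by positivity
    have h2 := Real.exp_pos (4 * γ2 s)
    nlinarith [sq_nonneg (deriv γ2 s)]

lemma Dcube (γ1 γ2 : ℝ → ℝ) (s : ℝ) (hA : 0 < (deriv γ1 s) ^ 2 * Real.exp (4 * γ2 s) + (deriv γ2 s) ^ 2) :
    ((deriv γ1 s) ^ 2 * Real.exp (4 * γ2 s) + (deriv γ2 s) ^ 2) ^ ((3:ℝ)/2)
      = D19 γ1 γ2 s ^ 3 := by
  rw [D19, Real.sqrt_eq_rpow, ← Real.rpow_natCast _ 3, ← Real.rpow_mul hA.le]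
  norm_num

/-- If γ satisfies γ₁″γ₂′ − γ₁′γ₂″ + 5γ₁′(γ₂′)² + 3e^{4γ₂}(γ₁′)³ = 0, then the hypersurface
F(u₁,u₂,u₃) = (u₁,u₂,γ₁(u₃),γ₂(u₃)) of Sol⁴₀ is totally umbilical: in the orthonormal
tangent frame {E₁, E₂, W}, W = (γ₁′e^{2γ₂}E₃+γ₂′E₄)/√((γ₁′)²e^{4γ₂}+(γ₂′)²), the second
fundamental form satisfies h(E₁,E₁) = h(E₂,E₂) = h(W,W) = λ (as coefficient of N) and
vanishes on mixed pairs. -/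
theorem sol40_totally_umbilical_hypersurface (γ1 γ2 : ℝ → ℝ)
    (h1 : ContDiff ℝ (⊤ : ℕ∞) γ1) (h2 : ContDiff ℝ (⊤ : ℕ∞) γ2)
    (hreg : ∀ s : ℝ, 0 < (deriv γ1 s) ^ 2 + (deriv γ2 s) ^ 2)
    (hode : ∀ s : ℝ,
      deriv (deriv γ1) s * deriv γ2 s - deriv γ1 s * deriv (deriv γ2) s +
        5 * deriv γ1 s * (deriv γ2 s) ^ 2 +
        3 * Real.exp (4 * γ2 s) * (deriv γ1 s) ^ 3 = 0) :
    (∀ u : Fin 3 → ℝ, Real.exp (2 * γ2 (u 2)) * h19 γ1 γ2 0 0 u = lam19 γ1 γ2 (u 2)) ∧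
    (∀ u : Fin 3 → ℝ, Real.exp (2 * γ2 (u 2)) * h19 γ1 γ2 1 1 u = lam19 γ1 γ2 (u 2)) ∧
    (∀ u : Fin 3 → ℝ, h19 γ1 γ2 2 2 u / (D19 γ1 γ2 (u 2)) ^ 2 = lam19 γ1 γ2 (u 2)) ∧
    (∀ (u : Fin 3 → ℝ) (i j : Fin 3), i ≠ j → h19 γ1 γ2 i j u = 0) := by
  refine ⟨fun u => ?_, fun u => ?_, fun u => ?_, fun u i j hij => hmix γ1 γ2 u i j hij⟩
  · have hA := Apos γ1 γ2 (u 2) (hreg (u 2))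
    have hD : 0 < D19 γ1 γ2 (u 2) := Real.sqrt_pos.mpr hA
    have hD2 : D19 γ1 γ2 (u 2) ^ 2
        = (deriv γ1 (u 2)) ^ 2 * Real.exp (4 * γ2 (u 2)) + (deriv γ2 (u 2)) ^ 2 :=
      Real.sq_sqrt hA.le
    have hnum : deriv (deriv γ1) (u 2) * deriv γ2 (u 2)
          - deriv γ1 (u 2) * deriv (deriv γ2) (u 2)
          + 4 * deriv γ1 (u 2) * deriv γ2 (u 2) ^ 2
          + 2 * Real.exp (4 * γ2 (u 2)) * deriv γ1 (u 2) ^ 3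
        = -(deriv γ1 (u 2)) *
            ((deriv γ1 (u 2)) ^ 2 * Real.exp (4 * γ2 (u 2)) + (deriv γ2 (u 2)) ^ 2) := by
      linear_combination hode (u 2)
    rw [h00, lam19, Dcube γ1 γ2 (u 2) hA, hnum, ← hD2]
    field_simp
  · have hA := Apos γ1 γ2 (u 2) (hreg (u 2))
    have hD : 0 < D19 γ1 γ2 (u 2) := Real.sqrt_pos.mpr hA
    have hD2 : D19 γ1 γ2 (u 2) ^ 2
        = (deriv γ1 (u 2)) ^ 2 * Real.exp (4 * γ2 (u 2)) + (deriv γ2 (u 2)) ^ 2 :=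
      Real.sq_sqrt hA.le
    have hnum : deriv (deriv γ1) (u 2) * deriv γ2 (u 2)
          - deriv γ1 (u 2) * deriv (deriv γ2) (u 2)
          + 4 * deriv γ1 (u 2) * deriv γ2 (u 2) ^ 2
          + 2 * Real.exp (4 * γ2 (u 2)) * deriv γ1 (u 2) ^ 3
        = -(deriv γ1 (u 2)) *
            ((deriv γ1 (u 2)) ^ 2 * Real.exp (4 * γ2 (u 2)) + (deriv γ2 (u 2)) ^ 2) := by
      linear_combination hode (u 2)
    rw [h11, lam19, Dcube γ1 γ2 (u 2) hA, hnum, ← hD2]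
    field_simp
  · have hA := Apos γ1 γ2 (u 2) (hreg (u 2))
    have hD : 0 < D19 γ1 γ2 (u 2) := Real.sqrt_pos.mpr hA
    rw [h22', lam19, Dcube γ1 γ2 (u 2) hA]
    field_simp
end
end
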